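/- arXiv:0903.1689 — 3 statements merged into one kernel-verified Lean document; each statement's English description precedes it below -/
import Mathlib

section
/- For all integers m and ℓ, the product {(X+Y)t^{3m+1} + (X⁻¹+Y⁻¹)t^{3m+2}}·{(X+Y)t^{3ℓ+1} + (X⁻¹+Y⁻¹)t^{3ℓ+2}} is a twin Laurent polynomial. -/
/-!
Write `A = X + Y` and `B = X⁻¹ + Y⁻¹`. Both square to zero, so in the product of
`A t^{3m+1} + B t^{3m+2}` and `A t^{3ℓ+1} + B t^{3ℓ+2}` only the cross terms survive, and they
combine into the single monomial `(AB + BA) t^{3(m+ℓ)+3}`. Its exponent is divisible by 3 and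
`AB + BA = 2I - 2XYX`, which is of the form required of such coefficients.
-/

/-- The image of (123) under the irreducible 3-dimensional integral representation of A₄. -/
def Xm : Matrix (Fin 3) (Fin 3) ℤ := !![-1, 1, 0; -1, 0, 0; -1, 0, 1]

/-- The image of (142) under the irreducible 3-dimensional integral representation of A₄. -/
def Ym : Matrix (Fin 3) (Fin 3) ℤ := !![0, 0, -1; 0, 1, -1; 1, 0, -1]

/-- The inverse of `Xm`, which equals `Xm ^ 2`. -/
def Xinv : Matrix (Fin 3) (Fin 3) ℤ := Xm ^ 2

/-- The inverse of `Ym`, which equals `Ym ^ 2`. -/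
def Yinv : Matrix (Fin 3) (Fin 3) ℤ := Ym ^ 2

open LaurentPolynomial Finset

/-- 3×3 integer matrices. -/
abbrev M3 : Type := Matrix (Fin 3) (Fin 3) ℤ

/-- Laurent polynomials in `t` with coefficients in `M3`. -/
abbrev L : Type := LaurentPolynomial M3

/-- A Laurent polynomial `f = ∑ d_j t^j` with 3×3 integer matrix coefficients is *twin* if
`d_j = c_j I + c_j' (XYX)` for `j ≡ 0 (mod 3)`, `d_j = a_j (X+Y)` for `j ≡ 1 (mod 3)`,
`d_j = b_j (X⁻¹+Y⁻¹)` for `j ≡ 2 (mod 3)`, and `a_{3j+1} = b_{3j+2}` for all `j`. -/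
def IsTwin (f : L) : Prop :=
  ∃ c c' a b : ℤ → ℤ,
    (∀ j : ℤ, j % 3 = 0 → f.coeff j = c j • (1 : M3) + c' j • (Xm * Ym * Xm)) ∧
    (∀ j : ℤ, j % 3 = 1 → f.coeff j = a j • (Xm + Ym)) ∧
    (∀ j : ℤ, j % 3 = 2 → f.coeff j = b j • (Xinv + Yinv)) ∧
    (∀ j : ℤ, a (3 * j + 1) = b (3 * j + 2))

namespace LaurentPolynomial

variable {R : Type*} [Semiring R]

theorem coeff_C_mul_T (a : R) (n m : ℤ) : (C a * T n).coeff m = if n = m then a else 0 := by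
  rw [← single_eq_C_mul_T]
  exact Finsupp.single_apply

theorem C_mul_T_add_C_mul_T_add_one_mul_of_mul_self_eq_zero {a b : R} (ha : a * a = 0)
    (hb : b * b = 0) (i j : ℤ) :
    (C a * T i + C b * T (i + 1)) * (C a * T j + C b * T (j + 1)) =
      C (a * b + b * a) * T (i + j + 1) := by
  simp only [← single_eq_C_mul_T, mul_add, add_mul, AddMonoidAlgebra.single_mul_single, ha, hb,
    AddMonoidAlgebra.single_zero, zero_add, add_zero]
  rw [← add_assoc, add_right_comm i 1 j, ← AddMonoidAlgebra.single_add, add_comm (b * a)]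

end LaurentPolynomial

theorem Xm_add_Ym_mul_self : (Xm + Ym) * (Xm + Ym) = 0 := by decide

theorem Xinv_add_Yinv_mul_self : (Xinv + Yinv) * (Xinv + Yinv) = 0 := by decide

theorem Xm_add_Ym_anticommutator :
    (Xm + Ym) * (Xinv + Yinv) + (Xinv + Yinv) * (Xm + Ym) =
      (2 : ℤ) • (1 : M3) + (-2 : ℤ) • (Xm * Ym * Xm) := by
  decide

theorem isTwin_C_mul_T (c c' : ℤ) {n : ℤ} (hn : n % 3 = 0) :
    IsTwin (C (c • (1 : M3) + c' • (Xm * Ym * Xm)) * T n) := by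
  refine ⟨fun j => if n = j then c else 0, fun j => if n = j then c' else 0, 0, 0,
    fun j _ => ?_, fun j hj => ?_, fun j hj => ?_, fun _ => rfl⟩
  · rw [coeff_C_mul_T]
    by_cases h : n = j <;> simp [h]
  · rw [coeff_C_mul_T, if_neg (by omega), Pi.zero_apply, zero_smul]
  · rw [coeff_C_mul_T, if_neg (by omega), Pi.zero_apply, zero_smul]

/-- For all integers `m, ℓ`, the product
`{(X+Y)t^{3m+1} + (X⁻¹+Y⁻¹)t^{3m+2}}·{(X+Y)t^{3ℓ+1} + (X⁻¹+Y⁻¹)t^{3ℓ+2}}` is twin. -/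
theorem stmt_8 (m ℓ : ℤ) :
    IsTwin ((C (Xm + Ym) * T (3 * m + 1) + C (Xinv + Yinv) * T (3 * m + 2)) *
      (C (Xm + Ym) * T (3 * ℓ + 1) + C (Xinv + Yinv) * T (3 * ℓ + 2))) := by
  rw [show 3 * m + 2 = 3 * m + 1 + 1 by ring, show 3 * ℓ + 2 = 3 * ℓ + 1 + 1 by ring,
    C_mul_T_add_C_mul_T_add_one_mul_of_mul_self_eq_zero Xm_add_Ym_mul_self
      Xinv_add_Yinv_mul_self, Xm_add_Ym_anticommutator]
  exact isTwin_C_mul_T 2 (-2) (by omega)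
end

section
/- For every integer k ≥ 0, the Laurent polynomial Y⁻¹t⁻¹·[(I − Yt)·Q_{−(3k+1)}(t)·Yt − (X⁻¹Y⁻¹)^{3k+1}·t^{−(6k+2)}]·(I − Xt) is twin. -/
open LaurentPolynomial Finset

/-- `Q m = ∑_{i=0}^m (YX)^i t^{2i}` for `m ≥ 0` and
`Q (-m) = ∑_{i=1}^m (X⁻¹Y⁻¹)^i t^{-2i}` for `m ≥ 1`. -/
noncomputable def Q (m : ℤ) : L :=
  if 0 ≤ m then ∑ i ∈ Finset.range (m.toNat + 1), C ((Ym * Xm) ^ i) * T (2 * (i : ℤ))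
  else ∑ i ∈ Finset.range (-m).toNat, C ((Xinv * Yinv) ^ (i + 1)) * T (-(2 * ((i : ℤ) + 1)))


/-! Put `Z = X⁻¹Y⁻¹`, which has order 3. Since `t` is central, the bracket
`Y⁻¹t⁻¹[(I − Yt)·q·Yt − r](I − Xt)` is additive in `(q, r)` and commutes with powers of `t`;
as `Q_{−(m+3)} = Q_{−3} + t⁻⁶ Q_{−m}` and `Z^{m+3} t^{−2(m+3)} = t⁻⁶ Z^m t^{−2m}`, the polynomial
for `m + 3` is the one for `Q_{−3}` alone plus `t⁻⁶` times the one for `m`. Twin polynomials are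
an additive group stable under multiplication by `t^{3n}`, so by induction on `k` it remains to
check two explicit Laurent polynomials: those for `m = 1` and for `Q_{−3}`. -/

lemma IsTwin.add {f g : L} (hf : IsTwin f) (hg : IsTwin g) : IsTwin (f + g) := by
  obtain ⟨c, c', a, b, hc, ha, hb, hab⟩ := hf
  obtain ⟨d, d', e, e', hd, he, he', hee'⟩ := hg
  refine ⟨c + d, c' + d', a + e, b + e', fun j hj => ?_, fun j hj => ?_, fun j hj => ?_,
    fun j => by simp only [Pi.add_apply, hab, hee']⟩
  · rw [AddMonoidAlgebra.coeff_add, Finsupp.add_apply, hc j hj, hd j hj]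
    simp only [Pi.add_apply, add_smul]
    abel
  · rw [AddMonoidAlgebra.coeff_add, Finsupp.add_apply, ha j hj, he j hj, Pi.add_apply, add_smul]
  · rw [AddMonoidAlgebra.coeff_add, Finsupp.add_apply, hb j hj, he' j hj, Pi.add_apply, add_smul]

lemma IsTwin.neg {f : L} (hf : IsTwin f) : IsTwin (-f) := by
  obtain ⟨c, c', a, b, hc, ha, hb, hab⟩ := hf
  refine ⟨-c, -c', -a, -b, fun j hj => ?_, fun j hj => ?_, fun j hj => ?_,
    fun j => by simp only [Pi.neg_apply, hab]⟩
  · rw [AddMonoidAlgebra.coeff_neg, Finsupp.neg_apply, hc j hj]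
    simp only [Pi.neg_apply, neg_smul, neg_add]
  · rw [AddMonoidAlgebra.coeff_neg, Finsupp.neg_apply, ha j hj, Pi.neg_apply, neg_smul]
  · rw [AddMonoidAlgebra.coeff_neg, Finsupp.neg_apply, hb j hj, Pi.neg_apply, neg_smul]

lemma IsTwin.sub {f g : L} (hf : IsTwin f) (hg : IsTwin g) : IsTwin (f - g) :=
  sub_eq_add_neg f g ▸ hf.add hg.neg

lemma IsTwin.T_mul {f : L} (hf : IsTwin f) {n : ℤ} (hn : 3 ∣ n) : IsTwin (T n * f) := by
  obtain ⟨c, c', a, b, hc, ha, hb, hab⟩ := hf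
  obtain ⟨n, rfl⟩ := hn
  have hcoeff (j : ℤ) : (T (3 * n) * f).coeff j = f.coeff (j - 3 * n) := by
    rw [T, AddMonoidAlgebra.coeff_single_mul_apply, one_mul, neg_add_eq_sub]
  refine ⟨fun j => c (j - 3 * n), fun j => c' (j - 3 * n), fun j => a (j - 3 * n),
    fun j => b (j - 3 * n), fun j hj => ?_, fun j hj => ?_, fun j hj => ?_, fun j => ?_⟩
  · rw [hcoeff, hc _ (by omega)]
  · rw [hcoeff, ha _ (by omega)]
  · rw [hcoeff, hb _ (by omega)]
  · simpa only [show 3 * j + 1 - 3 * n = 3 * (j - n) + 1 by ring,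
      show 3 * j + 2 - 3 * n = 3 * (j - n) + 2 by ring] using hab (j - n)

lemma isTwin_C (c c' : ℤ) : IsTwin (C (c • (1 : M3) + c' • (Xm * Ym * Xm))) := by
  refine ⟨fun j => if j = 0 then c else 0, fun j => if j = 0 then c' else 0, 0, 0,
    fun j _ => ?_, fun j hj => ?_, fun j hj => ?_, fun _ => rfl⟩
  · rw [C_apply]; split_ifs with h <;> simp [h]
  · rw [C_apply, if_neg (by omega), Pi.zero_apply, zero_smul]
  · rw [C_apply, if_neg (by omega), Pi.zero_apply, zero_smul]

lemma isTwin_one : IsTwin (1 : L) := by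
  simpa using isTwin_C 1 0

lemma isTwin_C_XYX : IsTwin (C (Xm * Ym * Xm)) := by
  simpa using isTwin_C 0 1

lemma coeff_C_mul_T (a : M3) (n j : ℤ) : (C a * T n : L).coeff j = if n = j then a else 0 := by
  rw [← single_eq_C_mul_T, AddMonoidAlgebra.coeff_single, Finsupp.single_apply]

noncomputable def twinPair : L := C (Xm + Ym) * T 1 + C (Xinv + Yinv) * T 2

lemma isTwin_twinPair : IsTwin twinPair := by
  refine ⟨0, 0, fun j => if j = 1 then 1 else 0, fun j => if j = 2 then 1 else 0,
    fun j hj => ?_, fun j hj => ?_, fun j hj => ?_, fun j => ?_⟩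
  · simp only [twinPair, AddMonoidAlgebra.coeff_add, Finsupp.add_apply, coeff_C_mul_T]
    rw [if_neg (by omega), if_neg (by omega)]; simp
  · simp only [twinPair, AddMonoidAlgebra.coeff_add, Finsupp.add_apply, coeff_C_mul_T]
    rw [if_neg (show (2 : ℤ) ≠ j by omega)]
    by_cases h : j = 1 <;> simp [h, eq_comm]
  · simp only [twinPair, AddMonoidAlgebra.coeff_add, Finsupp.add_apply, coeff_C_mul_T]
    rw [if_neg (show (1 : ℤ) ≠ j by omega)]
    by_cases h : j = 2 <;> simp [h, eq_comm]
  · simp only [show 3 * j + 1 = 1 ↔ j = 0 by omega, show 3 * j + 2 = 2 ↔ j = 0 by omega]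

lemma Xinv_mul_Yinv_pow_three : (Xinv * Yinv) ^ 3 = 1 := by decide

lemma C_pow_add_three_mul_T (n : ℕ) (e : ℤ) :
    C ((Xinv * Yinv) ^ (n + 3)) * T (e - 6) = T (-6) * (C ((Xinv * Yinv) ^ n) * T e) := by
  rw [pow_add, Xinv_mul_Yinv_pow_three, mul_one, T_mul, mul_assoc, ← T_add, sub_eq_add_neg]

/-- `Q (-n)` for `n ≥ 1`; unlike `Q 0 = 1`, `Qneg 0 = 0`. -/
noncomputable def Qneg (n : ℕ) : L :=
  ∑ i ∈ Finset.range n, C ((Xinv * Yinv) ^ (i + 1)) * T (-(2 * ((i : ℤ) + 1)))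

lemma Q_neg_natCast {n : ℕ} (hn : n ≠ 0) : Q (-n) = Qneg n := by
  rw [Q, if_neg (by omega), neg_neg, Int.toNat_natCast, Qneg]

lemma Qneg_add_three (n : ℕ) : Qneg (n + 3) = Qneg 3 + T (-6) * Qneg n := by
  rw [Qneg, add_comm, Finset.sum_range_add, Qneg, Qneg, Finset.mul_sum]
  congr 1
  refine Finset.sum_congr rfl fun i _ => ?_
  rw [show 3 + i + 1 = i + 1 + 3 by ring, ← C_pow_add_three_mul_T]
  congr 2
  push_cast
  ring

noncomputable def sandwich (q r : L) : L :=
  C Yinv * T (-1) * ((1 - C Ym * T 1) * q * (C Ym * T 1) - r) * (1 - C Xm * T 1)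

lemma sandwich_add (q q' r r' : L) :
    sandwich (q + q') (r + r') = sandwich q r + sandwich q' r' := by
  simp only [sandwich, mul_add, add_mul, mul_sub, sub_mul]
  abel

lemma sandwich_T_mul (q r : L) (n : ℤ) : sandwich (T n * q) (T n * r) = T n * sandwich q r := by
  have h (x y : L) : x * (T n * y) = T n * (x * y) := by rw [← mul_assoc, ← T_mul, mul_assoc]
  simp only [sandwich, mul_sub, sub_mul, mul_assoc, h]

noncomputable def sandwichQneg (m : ℕ) : L :=
  sandwich (Qneg m) (C ((Xinv * Yinv) ^ m) * T (-(2 * m)))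

lemma sandwichQneg_add_three (m : ℕ) :
    sandwichQneg (m + 3) = sandwich (Qneg 3) 0 + T (-6) * sandwichQneg m := by
  have hr : C ((Xinv * Yinv) ^ (m + 3)) * T (-(2 * ((m + 3 : ℕ) : ℤ)))
      = T (-6) * (C ((Xinv * Yinv) ^ m) * T (-(2 * m))) := by
    rw [← C_pow_add_three_mul_T]
    congr 2
    push_cast
    ring
  rw [sandwichQneg, sandwichQneg, Qneg_add_three, hr, ← sandwich_T_mul, ← sandwich_add, zero_add]

lemma sandwichQneg_one : sandwichQneg 1 = 1 - T (-3) * (twinPair + C (Xm * Ym * Xm)) := by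
  simp only [sandwichQneg, Qneg, twinPair, sandwich, Finset.sum_range_one, T, ← single_eq_C,
    ← single_zero_one_eq_one, mul_add, add_mul, mul_sub, sub_mul,
    AddMonoidAlgebra.single_mul_single]
  refine LaurentPolynomial.ext fun j => ?_
  simp only [AddMonoidAlgebra.coeff_add, AddMonoidAlgebra.coeff_sub, AddMonoidAlgebra.coeff_single,
    Finsupp.add_apply, Finsupp.sub_apply, Finsupp.single_apply]
  obtain h | h | h | h | h | h : j < -3 ∨ j = -3 ∨ j = -2 ∨ j = -1 ∨ j = 0 ∨ 0 < j := by omega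
  all_goals simp (disch := omega) only [if_pos, if_neg]; decide

lemma sandwich_Qneg_three_zero : sandwich (Qneg 3) 0 = 1 - T (-3) * (twinPair + C (Xm * Ym * Xm))
    - T (-3) * C (Xm * Ym * Xm) - T (-6) * (twinPair - 1) := by
  simp only [Qneg, twinPair, sandwich, Finset.sum_range_succ, Finset.sum_range_zero, T,
    ← single_eq_C, ← single_zero_one_eq_one, mul_add, add_mul, mul_sub, sub_mul, sub_zero,
    zero_add, AddMonoidAlgebra.single_mul_single]
  refine LaurentPolynomial.ext fun j => ?_
  simp only [AddMonoidAlgebra.coeff_add, AddMonoidAlgebra.coeff_sub, AddMonoidAlgebra.coeff_single,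
    Finsupp.add_apply, Finsupp.sub_apply, Finsupp.single_apply]
  obtain h | h | h | h | h | h | h | h | h : j < -6 ∨ j = -6 ∨ j = -5 ∨ j = -4 ∨ j = -3 ∨
    j = -2 ∨ j = -1 ∨ j = 0 ∨ 0 < j := by omega
  all_goals simp (disch := omega) only [if_pos, if_neg]; decide

lemma isTwin_sandwichQneg_one : IsTwin (sandwichQneg 1) := by
  rw [sandwichQneg_one]
  exact isTwin_one.sub ((isTwin_twinPair.add isTwin_C_XYX).T_mul (by norm_num))

lemma isTwin_sandwich_Qneg_three_zero : IsTwin (sandwich (Qneg 3) 0) := by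
  rw [sandwich_Qneg_three_zero]
  refine ((isTwin_one.sub ?_).sub ?_).sub ?_ <;> refine IsTwin.T_mul ?_ (by norm_num)
  exacts [isTwin_twinPair.add isTwin_C_XYX, isTwin_C_XYX, isTwin_twinPair.sub isTwin_one]

lemma isTwin_sandwichQneg_three_mul_add_one (k : ℕ) : IsTwin (sandwichQneg (3 * k + 1)) := by
  induction k with
  | zero => exact isTwin_sandwichQneg_one
  | succ k ih =>
    rw [show 3 * (k + 1) + 1 = 3 * k + 1 + 3 by ring, sandwichQneg_add_three]
    exact isTwin_sandwich_Qneg_three_zero.add (ih.T_mul (by norm_num))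

/-- For every `k ≥ 0`,
`Y⁻¹t⁻¹·[(I − Yt)·Q_{−(3k+1)}(t)·Yt − (X⁻¹Y⁻¹)^{3k+1}·t^{−(6k+2)}]·(I − Xt)` is twin. -/
theorem stmt_11 (k : ℕ) :
    IsTwin (C Yinv * T (-1) *
      ((1 - C Ym * T 1) * Q (-(3 * k + 1)) * (C Ym * T 1)
        - C ((Xinv * Yinv) ^ (3 * k + 1)) * T (-(6 * k + 2))) *
      (1 - C Xm * T 1)) := by
  have hQ : Q (-(3 * k + 1)) = Qneg (3 * k + 1) := by
    rw [← Q_neg_natCast (by omega)]; push_cast; rfl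
  have hT : (-(6 * k + 2) : ℤ) = -(2 * ((3 * k + 1 : ℕ) : ℤ)) := by push_cast; ring
  rw [hQ, hT]
  exact isTwin_sandwichQneg_three_mul_add_one k
end

section
/- The following identity of Laurent polynomials with 3×3 integer matrix coefficients holds: Y⁻¹t⁻¹·{(I − Yt)·Q₁(t)·Yt + (YX)²·t⁴}·(I − Xt) = I − (X+Y)·t − (X⁻¹+Y⁻¹)·t² − XYX·t³. -/
open LaurentPolynomial Finset

/-! The braid relation `XYX = YXY` makes the `t⁴` terms cancel, since `(YX)² = Y·(YXY)`, so the
bracket factors as `Yt·(I − Yt + XYt²)` and the prefactor `Y⁻¹t⁻¹` cancels its left factor. What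
remains is `(I − Yt + XYt²)(I − Xt)`, whose `t²`-coefficient `XY + YX` equals `−(X⁻¹ + Y⁻¹)`. -/

namespace LaurentPolynomial

variable {R : Type*} [Ring R]

theorem C_mul_T_mul_C_mul_T (a b : R) (m n : ℤ) :
    C a * T m * (C b * T n) = C (a * b) * T (m + n) := by
  rw [mul_assoc, ← mul_assoc (T m), T_mul, mul_assoc, ← mul_assoc, ← map_mul, ← T_add, add_comm]

theorem C_mul_T_neg_one_mul_C_mul_T_one {u y : R} (h : u * y = 1) :
    C u * T (-1) * (C y * T 1) = 1 := by
  rw [C_mul_T_mul_C_mul_T, h, neg_add_cancel, T_zero, map_one, one_mul]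

theorem eq_C_mul_T_one_mul_of_braid {x y : R} (h : x * y * x = y * x * y) :
    (1 - C y * T 1) * (1 + C (y * x) * T 2) * (C y * T 1) + C ((y * x) ^ 2) * T 4 =
      C y * T 1 * (1 - C y * T 1 + C (x * y) * T 2) := by
  have hsq : y * (y * x) * y = (y * x) ^ 2 := by
    rw [sq, mul_assoc y (y * x), ← h]
    simp only [mul_assoc]
  simp only [add_mul, mul_add, mul_sub, sub_mul, one_mul, mul_one, C_mul_T_mul_C_mul_T, hsq,
    Int.reduceAdd]
  rw [← mul_assoc y x y]
  abel

theorem one_sub_C_mul_T_add_C_mul_T_mul_one_sub_C_mul_T (x y : R) :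
    (1 - C y * T 1 + C (x * y) * T 2) * (1 - C x * T 1) =
      1 - C (x + y) * T 1 + C (x * y + y * x) * T 2 - C (x * y * x) * T 3 := by
  simp only [add_mul, mul_sub, sub_mul, one_mul, mul_one, C_mul_T_mul_C_mul_T, map_add,
    Int.reduceAdd]
  abel

end LaurentPolynomial

theorem Yinv_mul_Ym : Yinv * Ym = 1 := by decide

theorem Xm_mul_Ym_mul_Xm : Xm * Ym * Xm = Ym * Xm * Ym := by decide

theorem Xm_mul_Ym_add_Ym_mul_Xm : Xm * Ym + Ym * Xm = -(Xinv + Yinv) := by decide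

theorem Q_one : Q 1 = 1 + C (Ym * Xm) * T 2 := by
  simp [Q, Finset.sum_range_succ]

/-- `Y⁻¹t⁻¹·{(I − Yt)·Q₁(t)·Yt + (YX)²·t⁴}·(I − Xt)
    = I − (X+Y)·t − (X⁻¹+Y⁻¹)·t² − XYX·t³`. -/
theorem stmt_13 :
    C Yinv * T (-1) *
      ((1 - C Ym * T 1) * Q 1 * (C Ym * T 1) + C ((Ym * Xm) ^ 2) * T 4) *
      (1 - C Xm * T 1)
    = 1 - C (Xm + Ym) * T 1 - C (Xinv + Yinv) * T 2 - C (Xm * Ym * Xm) * T 3 := by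
  rw [Q_one, eq_C_mul_T_one_mul_of_braid Xm_mul_Ym_mul_Xm, ← mul_assoc (C Yinv * T (-1)),
    C_mul_T_neg_one_mul_C_mul_T_one Yinv_mul_Ym, one_mul,
    one_sub_C_mul_T_add_C_mul_T_mul_one_sub_C_mul_T, Xm_mul_Ym_add_Ym_mul_Xm, map_neg, neg_mul,
    ← sub_eq_add_neg]
end
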